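/- arXiv:math/0112084 — 2 statements merged into one kernel-verified Lean document; each statement's English description precedes it below -/
import Mathlib

section
/- Let W be a graded Poisson bracket on T*M inducing the Poisson structure w on M, and for a vector field X on M let m(X) denote its momentum function on T*M. Then the operator defined by D_{df}X := -(the vector field γ_X f determined by {m(X), f}_W = m(γ_X f)) satisfies D_{d(hf)}X = h D_{df}X + f D_{dh}X and D_{df}(hX) = h D_{df}X + (X_f^w h) X, i.e. D is a contravariant connection on (M,w); moreover the Jacobi identity for W forces D to be flat (its curvature C_D vanishes). -/
open scoped BigOperators
noncomputable section

/-- The model of the base manifold `M`: global coordinates `(x^i)` on an `n`-dimensional chart. -/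
abbrev Vec (n : ℕ) := Fin n → ℝ
/-- The model of the cotangent bundle `T*M`: points `(x, p)`. -/
abbrev Cot (n : ℕ) := Vec n × Vec n
/-- Index type for the `2n` coordinates `(x^i, p_i)` of `T*M`. -/
abbrev Idx (n : ℕ) := Fin n ⊕ Fin n

/-- Smoothness. -/
def Sm {E F : Type*} [NormedAddCommGroup E] [NormedSpace ℝ E]
    [NormedAddCommGroup F] [NormedSpace ℝ F] (f : E → F) : Prop := ContDiff ℝ (⊤ : ℕ∞) f

/-- Partial derivative `∂f/∂x^i` on the base. -/
def pd {n : ℕ} (i : Fin n) (f : Vec n → ℝ) (x : Vec n) : ℝ := fderiv ℝ f x (Pi.single i 1)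

/-- Coordinate direction in `T*M`. -/
def dirOf {n : ℕ} : Idx n → Cot n
  | Sum.inl i => (Pi.single i 1, 0)
  | Sum.inr i => (0, Pi.single i 1)

/-- Partial derivative on `T*M` in the direction of the `a`-th coordinate. -/
def DT {n : ℕ} (a : Idx n) (F : Cot n → ℝ) (z : Cot n) : ℝ := fderiv ℝ F z (dirOf a)
/-- `∂/∂x^i` on `T*M`. -/
def Dxx {n : ℕ} (i : Fin n) : (Cot n → ℝ) → Cot n → ℝ := DT (Sum.inl i)
/-- `∂/∂p_i` on `T*M`. -/
def Dpp {n : ℕ} (i : Fin n) : (Cot n → ℝ) → Cot n → ℝ := DT (Sum.inr i)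

/-- A bivector field on `T*M`, given by its component matrix `W^{AB}`
(the bivector is `(1/2) W^{AB} ∂_A ∧ ∂_B`). -/
abbrev Biv (n : ℕ) := Cot n → Idx n → Idx n → ℝ

/-- The bracket of functions on `T*M` defined by a bivector field `W`. -/
def bkt {n : ℕ} (W : Biv n) (F G : Cot n → ℝ) (z : Cot n) : ℝ :=
  ∑ a : Idx n, ∑ b : Idx n, W z a b * DT a F z * DT b G z

/-- The bracket of functions on `M` defined by a bivector field `w` on `M`
(components `w^{ij}`, the bivector being `(1/2) w^{ij} ∂_i ∧ ∂_j`). -/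
def bktM {n : ℕ} (w : Vec n → Fin n → Fin n → ℝ) (f g : Vec n → ℝ) (x : Vec n) : ℝ :=
  ∑ i, ∑ j, w x i j * pd i f x * pd j g x

def SkewT {n : ℕ} (W : Biv n) : Prop := ∀ z a b, W z a b = - W z b a
def SmoothT {n : ℕ} (W : Biv n) : Prop := ∀ a b, Sm fun z => W z a b
/-- The Jacobi identity for the bracket of `W`, i.e. `[W,W] = 0`. -/
def JacobiT {n : ℕ} (W : Biv n) : Prop :=
  ∀ F G H : Cot n → ℝ, Sm F → Sm G → Sm H → ∀ z,
    bkt W (bkt W F G) H z + bkt W (bkt W G H) F z + bkt W (bkt W H F) G z = 0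

def SkewM {n : ℕ} (w : Vec n → Fin n → Fin n → ℝ) : Prop := ∀ x i j, w x i j = - w x j i
def SmoothM {n : ℕ} (w : Vec n → Fin n → Fin n → ℝ) : Prop := ∀ i j, Sm fun x => w x i j
def JacobiM {n : ℕ} (w : Vec n → Fin n → Fin n → ℝ) : Prop :=
  ∀ f g h : Vec n → ℝ, Sm f → Sm g → Sm h → ∀ x,
    bktM w (bktM w f g) h x + bktM w (bktM w g h) f x + bktM w (bktM w h f) g x = 0

/-- A Poisson structure on `T*M`. -/
def PoissonT {n : ℕ} (W : Biv n) : Prop := SkewT W ∧ SmoothT W ∧ JacobiT W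
/-- A Poisson structure on `M`. -/
def PoissonM {n : ℕ} (w : Vec n → Fin n → Fin n → ℝ) : Prop := SkewM w ∧ SmoothM w ∧ JacobiM w

/-- `F : T*M → ℝ` is a fiberwise polynomial of degree `≤ k`. -/
def PolyDeg {n : ℕ} (k : ℕ) (F : Cot n → ℝ) : Prop :=
  ∃ P : Vec n → MvPolynomial (Fin n) ℝ, (∀ x, (P x).totalDegree ≤ k) ∧
    ∀ x p, F (x, p) = MvPolynomial.eval p (P x)

/-- `F : T*M → ℝ` is a fiberwise homogeneous polynomial of degree `k`. -/
def HomogPoly {n : ℕ} (k : ℕ) (F : Cot n → ℝ) : Prop :=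
  ∃ P : Vec n → MvPolynomial (Fin n) ℝ, (∀ x, (P x).IsHomogeneous k) ∧
    ∀ x p, F (x, p) = MvPolynomial.eval p (P x)

/-- Polynomially graded bivector field: brackets of fiberwise polynomials of degree `≤ h`
and `≤ k` are fiberwise polynomials of degree `≤ h + k`. -/
def PolyGraded {n : ℕ} (W : Biv n) : Prop :=
  ∀ (h k : ℕ) (F G : Cot n → ℝ), Sm F → Sm G → PolyDeg h F → PolyDeg k G →
    PolyDeg (h + k) (bkt W F G)

/-- Graded bivector field: brackets of fiberwise homogeneous polynomials of degrees `h`, `k`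
are fiberwise homogeneous of degree `h + k`. -/
def HGraded {n : ℕ} (W : Biv n) : Prop :=
  ∀ (h k : ℕ) (F G : Cot n → ℝ), Sm F → Sm G → HomogPoly h F → HomogPoly k G →
    HomogPoly (h + k) (bkt W F G)

/-- The momentum `m(X)` of a vector field `X` on `M`. -/
def mmt {n : ℕ} (X : Vec n → Vec n) (z : Cot n) : ℝ := ∑ i, z.2 i * X z.1 i

/-- The quadratic fiberwise polynomial `s(Q)` of a symmetric 2-contravariant tensor field. -/
def sQ {n : ℕ} (G : Vec n → Fin n → Fin n → ℝ) (z : Cot n) : ℝ :=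
  ∑ i, ∑ j, G z.1 i j * z.2 i * z.2 j

/-- `W` is `π`-related to `w`: the projection `π : T*M → M` is a Poisson mapping. -/
def PiRel {n : ℕ} (W : Biv n) (w : Vec n → Fin n → Fin n → ℝ) : Prop :=
  ∀ f g : Vec n → ℝ, Sm f → Sm g → ∀ z : Cot n,
    bkt W (fun y => f y.1) (fun y => g y.1) z = bktM w f g z.1

/-- Foliated function of the vertical foliation of `T*M`: constant on the fibers. -/
def FolV {n : ℕ} (F : Cot n → ℝ) : Prop := ∀ (x p p' : Vec n), F (x, p) = F (x, p')

/-- Transversal Poisson structure of the vertical foliation of `T*M`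
(semi-Poisson structure): the bracket restricts to a Lie bracket on foliated functions. -/
def SemiPoissonT {n : ℕ} (W : Biv n) : Prop :=
  (∀ F G, Sm F → Sm G → FolV F → FolV G → FolV (bkt W F G)) ∧
  (∀ F G H, Sm F → Sm G → Sm H → FolV F → FolV G → FolV H → ∀ z,
    bkt W (bkt W F G) H z + bkt W (bkt W G H) F z + bkt W (bkt W H F) G z = 0)

/-- The `w`-Hamiltonian vector field of `f` : `(X_f^w)^j = w^{ij} ∂_i f`. -/
def ham {n : ℕ} (w : Vec n → Fin n → Fin n → ℝ) (f : Vec n → ℝ) (x : Vec n) (j : Fin n) : ℝ :=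
  ∑ i, w x i j * pd i f x

/-- Contravariant derivative of a vector field, with coefficients
`D_{dx^i} ∂_j = -Γ^{ik}_j ∂_k`, applied in the direction `df`:
`(D_{df}X)^j = ∂_i f (w^{ib} ∂_b X^j - Γ^{ij}_k X^k)`. -/
def Dvec {n : ℕ} (w : Vec n → Fin n → Fin n → ℝ) (Γ : Vec n → Fin n → Fin n → Fin n → ℝ)
    (f : Vec n → ℝ) (X : Vec n → Vec n) (x : Vec n) (j : Fin n) : ℝ :=
  ∑ i, pd i f x *
    ((∑ b, w x i b * pd b (fun y => X y j) x) - ∑ k, Γ x i j k * X x k)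

/-- The extension of the contravariant derivative `D_{df}` to symmetric 2-tensor fields. -/
def Dten2 {n : ℕ} (w : Vec n → Fin n → Fin n → ℝ) (Γ : Vec n → Fin n → Fin n → Fin n → ℝ)
    (f : Vec n → ℝ) (G : Vec n → Fin n → Fin n → ℝ) (x : Vec n) (i j : Fin n) : ℝ :=
  (∑ a, ∑ b, w x a b * pd a f x * pd b (fun y => G y i j) x)
   - (∑ a, ∑ h, pd a f x * Γ x a i h * G x h j)
   - (∑ a, ∑ h, pd a f x * Γ x a j h * G x i h)

def SmoothVF {n : ℕ} (X : Vec n → Vec n) : Prop := ∀ i, Sm fun x => X x i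
def SmoothGam {n : ℕ} (Γ : Vec n → Fin n → Fin n → Fin n → ℝ) : Prop :=
  ∀ i j k, Sm fun x => Γ x i j k

-- helper lemmas

lemma sm_DT {n : ℕ} {F : Cot n → ℝ} (hF : Sm F) (a : Idx n) : Sm (DT a F) := by
  unfold Sm DT
  exact (hF.fderiv_right (by simp)).clm_apply contDiff_const

lemma sm_pd {n : ℕ} {f : Vec n → ℝ} (hf : Sm f) (i : Fin n) : Sm (pd i f) := by
  unfold Sm pd
  exact (hf.fderiv_right (by simp)).clm_apply contDiff_const

lemma sm_bkt {n : ℕ} {W : Biv n} {F G : Cot n → ℝ} (hW : SmoothT W) (hF : Sm F) (hG : Sm G) :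
    Sm (bkt W F G) := by
  unfold Sm bkt
  refine ContDiff.sum fun a _ => ContDiff.sum fun b _ => ?_
  exact ((hW a b).mul (sm_DT hF a)).mul (sm_DT hG b)

lemma sm_mmt {n : ℕ} {X : Vec n → Vec n} (hX : SmoothVF X) : Sm (mmt X) := by
  unfold Sm mmt
  refine ContDiff.sum fun i _ => ContDiff.mul ?_ ?_
  · exact ((ContinuousLinearMap.proj i : Vec n →L[ℝ] ℝ).contDiff).comp contDiff_snd
  · exact (hX i).comp contDiff_fst

lemma sm_bktM {n : ℕ} {w : Vec n → Fin n → Fin n → ℝ} {f g : Vec n → ℝ}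
    (hw : ∀ i j, Sm fun x => w x i j) (hf : Sm f) (hg : Sm g) : Sm (bktM w f g) := by
  unfold Sm bktM
  refine ContDiff.sum fun i _ => ContDiff.sum fun j _ => ?_
  exact ((hw i j).mul (sm_pd hf i)).mul (sm_pd hg j)

lemma mmt_single {n : ℕ} (X : Vec n → Vec n) (x : Vec n) (i : Fin n) :
    mmt X (x, Pi.single i 1) = X x i := by
  simp [mmt, Pi.single_apply, ite_mul]

lemma bkt_skew {n : ℕ} {W : Biv n} (hsk : SkewT W) (F G : Cot n → ℝ) (z : Cot n) :
    bkt W F G z = - bkt W G F z := by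
  unfold bkt
  rw [Finset.sum_comm, ← Finset.sum_neg_distrib]
  refine Finset.sum_congr rfl fun a _ => ?_
  rw [← Finset.sum_neg_distrib]
  refine Finset.sum_congr rfl fun b _ => ?_
  rw [hsk z b a]; ring

lemma bktM_skew {n : ℕ} {w : Vec n → Fin n → Fin n → ℝ} (hsk : SkewM w) (f g : Vec n → ℝ)
    (x : Vec n) : bktM w f g x = - bktM w g f x := by
  unfold bktM
  rw [Finset.sum_comm, ← Finset.sum_neg_distrib]
  refine Finset.sum_congr rfl fun i _ => ?_
  rw [← Finset.sum_neg_distrib]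
  refine Finset.sum_congr rfl fun j _ => ?_
  rw [hsk x j i]; ring

lemma DT_neg {n : ℕ} (a : Idx n) (F : Cot n → ℝ) (z : Cot n) :
    DT a (fun y => -(F y)) z = -(DT a F z) := by
  simp [DT, fderiv_neg]

lemma bkt_neg_left {n : ℕ} (W : Biv n) (F G : Cot n → ℝ) (z : Cot n) :
    bkt W (fun y => -(F y)) G z = - bkt W F G z := by
  simp only [bkt, DT_neg, mul_neg, neg_mul, ← Finset.sum_neg_distrib]

lemma DT_mul {n : ℕ} (a : Idx n) {F G : Cot n → ℝ} {z : Cot n}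
    (hF : DifferentiableAt ℝ F z) (hG : DifferentiableAt ℝ G z) :
    DT a (fun y => F y * G y) z = F z * DT a G z + G z * DT a F z := by
  simp [DT, fderiv_fun_mul hF hG]

lemma bkt_mul_right {n : ℕ} (W : Biv n) {F G H : Cot n → ℝ} {z : Cot n}
    (hG : DifferentiableAt ℝ G z) (hH : DifferentiableAt ℝ H z) :
    bkt W F (fun y => G y * H y) z = G z * bkt W F H z + H z * bkt W F G z := by
  simp only [bkt, DT_mul _ hG hH, Finset.mul_sum]
  rw [← Finset.sum_add_distrib]
  refine Finset.sum_congr rfl fun a _ => ?_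
  rw [← Finset.sum_add_distrib]
  refine Finset.sum_congr rfl fun b _ => ?_
  ring

lemma bkt_mul_left {n : ℕ} (W : Biv n) {F G H : Cot n → ℝ} {z : Cot n}
    (hF : DifferentiableAt ℝ F z) (hG : DifferentiableAt ℝ G z) :
    bkt W (fun y => F y * G y) H z = F z * bkt W G H z + G z * bkt W F H z := by
  simp only [bkt, DT_mul _ hF hG, Finset.mul_sum]
  rw [← Finset.sum_add_distrib]
  refine Finset.sum_congr rfl fun a _ => ?_
  rw [← Finset.sum_add_distrib]
  refine Finset.sum_congr rfl fun b _ => ?_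
  ring

lemma mmt_smul {n : ℕ} (h : Vec n → ℝ) (X : Vec n → Vec n) (z : Cot n) :
    mmt (fun y j => h y * X y j) z = h z.1 * mmt X z := by
  simp [mmt, Finset.mul_sum]
  exact Finset.sum_congr rfl fun i _ => by ring

lemma mmt_neg {n : ℕ} (Y : Vec n → Vec n) (z : Cot n) :
    mmt (fun y j => -(Y y j)) z = -(mmt Y z) := by
  simp [mmt, Finset.sum_neg_distrib]

/-- for a graded Poisson structure `W` on `T*M` inducing `w` on `M`,
the operator `D_{df}X := -γ_X f` (where `{m(X), f}_W = m(γ_X f)`) is a contravariant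
connection on `(M,w)` (Leibniz rules in both arguments), and the Jacobi identity of `W`
forces `D` to be flat: `C_D(df,dh) = D_{df}D_{dh} - D_{dh}D_{df} - D_{d{f,h}_w} = 0`. -/
theorem stmt2 {n : ℕ} (W : Biv n) (w : Vec n → Fin n → Fin n → ℝ)
    (hW : PoissonT W) (hgr : HGraded W) (hw : PoissonM w) (hrel : PiRel W w)
    (γ : (Vec n → Vec n) → (Vec n → ℝ) → (Vec n → Vec n))
    (hγ : ∀ (X : Vec n → Vec n) (f : Vec n → ℝ), SmoothVF X → Sm f →
      ∀ z : Cot n, bkt W (mmt X) (fun y => f y.1) z = mmt (γ X f) z)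
    (Dc : (Vec n → ℝ) → (Vec n → Vec n) → (Vec n → Vec n))
    (hDc : ∀ f X x i, Dc f X x i = -(γ X f x i)) :
    -- `D_{d(hf)}X = h D_{df}X + f D_{dh}X`
    (∀ (f h : Vec n → ℝ) (X : Vec n → Vec n), Sm f → Sm h → SmoothVF X →
      ∀ x i, Dc (fun y => h y * f y) X x i = h x * Dc f X x i + f x * Dc h X x i) ∧
    -- `D_{df}(hX) = h D_{df}X + (X_f^w h) X`
    (∀ (f h : Vec n → ℝ) (X : Vec n → Vec n), Sm f → Sm h → SmoothVF X →
      ∀ x i, Dc f (fun y j => h y * X y j) x i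
        = h x * Dc f X x i + bktM w f h x * X x i) ∧
    -- flatness: `C_D(df,dh)X = 0`
    (∀ (f h : Vec n → ℝ) (X : Vec n → Vec n), Sm f → Sm h → SmoothVF X →
      ∀ x i, Dc f (Dc h X) x i - Dc h (Dc f X) x i - Dc (bktM w f h) X x i = 0) := by

  obtain ⟨skewT, smoothT, jacT⟩ := hW
  obtain ⟨skewM, smoothM, _⟩ := hw
  have dA : ∀ {E F : Type} [NormedAddCommGroup E] [NormedSpace ℝ E]
      [NormedAddCommGroup F] [NormedSpace ℝ F] {f : E → F}, Sm f → ∀ z, DifferentiableAt ℝ f z :=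
    fun hf z => (hf.differentiable (by simp)).differentiableAt
  -- component formula for γ
  have hγeq : ∀ (X : Vec n → Vec n) (f : Vec n → ℝ), SmoothVF X → Sm f → ∀ x i,
      γ X f x i = bkt W (mmt X) (fun y => f y.1) (x, Pi.single i 1) := by
    intro X f hX hf x i
    rw [hγ X f hX hf, mmt_single]
  -- smoothness of γ
  have hγsm : ∀ (X : Vec n → Vec n) (f : Vec n → ℝ), SmoothVF X → Sm f →
      SmoothVF (γ X f) := by
    intro X f hX hf i
    have e : (fun x => γ X f x i)
        = fun x => bkt W (mmt X) (fun y => f y.1) (x, Pi.single i 1) :=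
      funext fun x => hγeq X f hX hf x i
    rw [e]
    exact (sm_bkt smoothT (sm_mmt hX) (hf.comp contDiff_fst)).comp
      (contDiff_id.prodMk contDiff_const)
  -- γ of a negated vector field
  have hγneg : ∀ (Y : Vec n → Vec n) (f : Vec n → ℝ), SmoothVF Y → Sm f → ∀ x i,
      γ (fun y j => -(Y y j)) f x i = -(γ Y f x i) := by
    intro Y f hY hf x i
    have hY' : SmoothVF (fun y j => -(Y y j)) := fun j => (hY j).neg
    rw [hγeq _ f hY' hf x i]
    have e : mmt (fun y j => -(Y y j)) = fun z => -(mmt Y z) := funext (mmt_neg Y)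
    rw [e, bkt_neg_left, ← hγeq Y f hY hf x i]
  refine ⟨?_, ?_, ?_⟩
  · -- Leibniz in the 1-form argument
    intro f h X hf hh hX x i
    rw [hDc, hDc, hDc]
    have key : γ X (fun y => h y * f y) x i = h x * γ X f x i + f x * γ X h x i := by
      calc γ X (fun y => h y * f y) x i
          = bkt W (mmt X) (fun z => h z.1 * f z.1) (x, Pi.single i 1) :=
            hγeq X _ hX (hh.mul hf) x i
        _ = h x * bkt W (mmt X) (fun z => f z.1) (x, Pi.single i 1)
            + f x * bkt W (mmt X) (fun z => h z.1) (x, Pi.single i 1) :=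
            bkt_mul_right W (dA (hh.comp contDiff_fst) _) (dA (hf.comp contDiff_fst) _)
        _ = h x * γ X f x i + f x * γ X h x i := by
            rw [← hγeq X f hX hf x i, ← hγeq X h hX hh x i]
    rw [key]; ring
  · -- Leibniz in the vector field argument
    intro f h X hf hh hX x i
    rw [hDc, hDc]
    have hhX : SmoothVF (fun y j => h y * X y j) := fun j => hh.mul (hX j)
    have key : γ (fun y j => h y * X y j) f x i
        = h x * γ X f x i + bktM w h f x * X x i := by
      rw [hγeq _ f hhX hf x i]
      have e : mmt (fun y j => h y * X y j) = fun z => h z.1 * mmt X z :=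
        funext (mmt_smul h X)
      rw [e]
      rw [bkt_mul_left W (F := fun y => h y.1) (G := mmt X) (dA (hh.comp contDiff_fst) _) (dA (sm_mmt hX) _)]
      rw [← hγeq X f hX hf x i, hrel h f hh hf (x, Pi.single i 1), mmt_single]
      ring
    rw [key, bktM_skew skewM f h x]; ring
  · -- flatness
    intro f h X hf hh hX x i
    set g : Vec n → ℝ := bktM w f h with hg_def
    have hg : Sm g := sm_bktM smoothM hf hh
    have hXf := hγsm X f hX hf
    have hXh := hγsm X h hX hh
    set z : Cot n := (x, Pi.single i 1) with hz
    have jac := jacT (mmt X) (fun y => f y.1) (fun y => h y.1)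
      (sm_mmt hX) (hf.comp contDiff_fst) (hh.comp contDiff_fst) z
    have e1 : bkt W (mmt X) (fun y => f y.1) = mmt (γ X f) := funext (hγ X f hX hf)
    have e2 : bkt W (fun y => f y.1) (fun y => h y.1) = fun y => g y.1 :=
      funext fun y => hrel f h hf hh y
    have e3 : bkt W (fun y => h y.1) (mmt X) = fun y => -(mmt (γ X h) y) :=
      funext fun y => by rw [bkt_skew skewT, hγ X h hX hh]
    rw [e1, e2, e3] at jac
    rw [hγ (γ X f) h hXf hh z] at jac
    rw [bkt_skew skewT (fun y => g y.1) (mmt X) z] at jac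
    rw [show bkt W (mmt X) (fun y => g y.1) z = mmt (γ X g) z from hγ X g hX hg z] at jac
    rw [bkt_neg_left W (mmt (γ X h)) (fun y => f y.1) z] at jac
    rw [hγ (γ X h) f hXh hf z] at jac
    rw [hz, mmt_single, mmt_single, mmt_single] at jac
    -- jac : γ (γ X f) h x i - γ X g x i - γ (γ X h) f x i = 0 (up to signs)
    have eDh : Dc h X = fun y j => -(γ X h y j) :=
      funext fun y => funext fun j => hDc h X y j
    have eDf : Dc f X = fun y j => -(γ X f y j) :=
      funext fun y => funext fun j => hDc f X y j
    rw [hDc f (Dc h X) x i, hDc h (Dc f X) x i, hDc (bktM w f h) X x i]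
    rw [eDh, eDf, hγneg (γ X h) f hXh hf x i, hγneg (γ X f) h hXf hh x i]
    linarith
end
end

section
/- A bivector field w on a foliated manifold (N, F) defines a transversal Poisson structure (i.e. {f,g} := w(df,dg) is a Lie bracket on the algebra of foliated functions) if and only if (L_Y w)|_{Ann TF} = 0 for all vector fields Y tangent to F and [w,w]|_{Ann TF} = 0. -/
open scoped BigOperators
noncomputable section

/-- A function on `N` foliated w.r.t. the coordinate foliation spanned by `{∂_i | i ∈ S}`. -/
def FolS {n : ℕ} (S : Finset (Fin n)) (f : Vec n → ℝ) : Prop := ∀ i ∈ S, ∀ x, pd i f x = 0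

/-- A vector field tangent to the coordinate foliation spanned by `{∂_i | i ∈ S}`. -/
def TangS {n : ℕ} (S : Finset (Fin n)) (Y : Vec n → Vec n) : Prop :=
  ∀ i, i ∉ S → ∀ x, Y x i = 0

/-- Components of the Lie derivative `L_Y w` of a bivector field. -/
def LieBiv {n : ℕ} (Y : Vec n → Vec n) (w : Vec n → Fin n → Fin n → ℝ)
    (x : Vec n) (i j : Fin n) : ℝ :=
  (∑ k, Y x k * pd k (fun y => w y i j) x)
    - (∑ k, w x k j * pd k (fun y => Y y i) x)
    - (∑ k, w x i k * pd k (fun y => Y y j) x)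

/-- Components of the Schouten–Nijenhuis bracket `[w,w]`. -/
def SchComp {n : ℕ} (w : Vec n → Fin n → Fin n → ℝ) (x : Vec n) (i j k : Fin n) : ℝ :=
  ∑ h, (w x h i * pd h (fun y => w y j k) x + w x h j * pd h (fun y => w y k i) x
      + w x h k * pd h (fun y => w y i j) x)

section Aux

variable {n : ℕ}

/-! ### Calculus lemmas for `pd` -/

lemma pd_const (i : Fin n) (c : ℝ) (x : Vec n) : pd i (fun _ => c) x = 0 := by
  simp [pd]

lemma pd_diff {f : Vec n → ℝ} (hf : Sm f) (i : Fin n) : Differentiable ℝ (pd i f) := by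
  have h1 : ContDiff ℝ 1 (fderiv ℝ f) := hf.fderiv_right (WithTop.coe_le_coe.mpr le_top)
  exact (h1.differentiable one_ne_zero).clm_apply (differentiable_const _)

lemma pd_sum {ι : Type*} {x : Vec n} (s : Finset ι) (F : ι → Vec n → ℝ)
    (hF : ∀ b ∈ s, DifferentiableAt ℝ (F b) x) (a : Fin n) :
    pd a (fun y => ∑ b ∈ s, F b y) x = ∑ b ∈ s, pd a (F b) x := by
  simp [pd, fderiv_fun_sum hF]

lemma pd_mul {u v : Vec n → ℝ} {x : Vec n} (hu : DifferentiableAt ℝ u x)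
    (hv : DifferentiableAt ℝ v x) (a : Fin n) :
    pd a (fun y => u y * v y) x = u x * pd a v x + v x * pd a u x := by
  simp [pd, fderiv_fun_mul hu hv]

lemma pd_mul3 {u v t : Vec n → ℝ} {x : Vec n} (hu : DifferentiableAt ℝ u x)
    (hv : DifferentiableAt ℝ v x) (ht : DifferentiableAt ℝ t x) (a : Fin n) :
    pd a (fun y => u y * v y * t y) x
      = pd a u x * v x * t x + u x * pd a v x * t x + u x * v x * pd a t x := by
  rw [pd_mul (u := fun y => u y * v y) (v := t) (hu.mul hv) ht a, pd_mul hu hv a]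
  ring

lemma pd_pd_eq {f : Vec n → ℝ} (hf : Sm f) (a i : Fin n) (x : Vec n) :
    pd a (pd i f) x = fderiv ℝ (fderiv ℝ f) x (Pi.single a 1) (Pi.single i 1) := by
  have hdf : DifferentiableAt ℝ (fderiv ℝ f) x :=
    ((hf.fderiv_right (m := 1) (WithTop.coe_le_coe.mpr le_top)).differentiable one_ne_zero) x
  have : pd a (pd i f) x
      = fderiv ℝ (fun y => (fderiv ℝ f y) ((fun _ => (Pi.single i 1 : Vec n)) y)) x
          (Pi.single a 1) := rfl
  rw [this, fderiv_clm_apply hdf (differentiableAt_const _)]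
  simp

lemma pd_comm {f : Vec n → ℝ} (hf : Sm f) (a i : Fin n) (x : Vec n) :
    pd a (pd i f) x = pd i (pd a f) x := by
  rw [pd_pd_eq hf a i, pd_pd_eq hf i a]
  exact hf.contDiffAt.isSymmSndFDerivAt (by rw [minSmoothness_of_isRCLikeNormedField]; exact WithTop.coe_le_coe.mpr (le_top : (2:ℕ∞) ≤ ⊤)) _ _

/-! ### Coordinate functions -/

def coord (j : Fin n) : Vec n → ℝ := fun x => x j

lemma sm_coord (j : Fin n) : Sm (coord (n := n) j) :=
  (ContinuousLinearMap.proj (R := ℝ) (φ := fun _ : Fin n => ℝ) j).contDiff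

lemma pd_coord (i j : Fin n) (x : Vec n) :
    pd i (coord j) x = if i = j then 1 else 0 := by
  have : pd i (coord (n := n) j) x
      = fderiv ℝ (⇑(ContinuousLinearMap.proj (R := ℝ) (φ := fun _ : Fin n => ℝ) j)) x
          (Pi.single i 1) := rfl
  rw [this, ContinuousLinearMap.fderiv]
  simp [ContinuousLinearMap.proj_apply, Pi.single_apply, eq_comm]

lemma fol_coord {S : Finset (Fin n)} {j : Fin n} (hj : j ∉ S) : FolS S (coord j) := by
  intro i hi x
  rw [pd_coord]
  have : i ≠ j := fun h => hj (h ▸ hi)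
  simp [this]

lemma bktM_coord (w : Vec n → Fin n → Fin n → ℝ) (i j : Fin n) :
    bktM w (coord i) (coord j) = fun x => w x i j := by
  funext x
  simp [bktM, pd_coord]

end Aux

section Alg

variable {n : ℕ}

lemma sum3_rot (G : Fin n → Fin n → Fin n → ℝ) :
    (∑ i, ∑ j, ∑ k, G k i j) = ∑ i, ∑ j, ∑ k, G i j k := by
  rw [show (∑ i, ∑ j, ∑ k, G k i j) = ∑ i, ∑ k, ∑ j, G k i j from
    Finset.sum_congr rfl fun i _ => Finset.sum_comm]
  exact Finset.sum_comm

lemma sum3_rot' (G : Fin n → Fin n → Fin n → ℝ) :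
    (∑ i, ∑ j, ∑ k, G j k i) = ∑ i, ∑ j, ∑ k, G i j k :=
  (sum3_rot fun a b c => G c a b).trans (sum3_rot G)

lemma sum4_rot (G : Fin n → Fin n → Fin n → Fin n → ℝ) :
    (∑ a, ∑ i, ∑ j, ∑ k, G a i j k) = ∑ i, ∑ j, ∑ k, ∑ a, G a i j k := by
  rw [Finset.sum_comm]
  refine Finset.sum_congr rfl fun i _ => ?_
  rw [Finset.sum_comm]
  exact Finset.sum_congr rfl fun j _ => Finset.sum_comm

/-- The cancellation of second-derivative terms in the cyclic Jacobi sum. -/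
lemma cancelE {W S : Fin n → Fin n → ℝ} (hW : ∀ a b, W a b = -W b a)
    (hS : ∀ a b, S a b = S b a) (P Q : Fin n → ℝ) :
    (∑ a, ∑ i, ∑ j, ∑ k, W a k * W i j * S a i * P j * Q k)
      + (∑ a, ∑ i, ∑ j, ∑ k, W a k * W i j * Q i * S a j * P k) = 0 := by
  have h1 : (∑ a, ∑ i, ∑ j, ∑ k, W a k * W i j * Q i * S a j * P k)
      = ∑ a, ∑ i, ∑ j, ∑ k, W a j * W k i * Q k * S a i * P j := by
    refine Finset.sum_congr rfl fun a _ => ?_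
    exact (sum3_rot fun i j k => W a k * W i j * Q i * S a j * P k).symm
  rw [h1]
  have h2 : (∑ a, ∑ i, ∑ j, ∑ k, W a k * W i j * S a i * P j * Q k)
      + (∑ a, ∑ i, ∑ j, ∑ k, W a j * W k i * Q k * S a i * P j)
      = ∑ a, ∑ i, ∑ j, ∑ k,
          (W a k * W i j * S a i * P j * Q k + W a j * W k i * Q k * S a i * P j) := by
    simp [← Finset.sum_add_distrib]
  rw [h2]
  set C := ∑ a, ∑ i, ∑ j, ∑ k,
      (W a k * W i j * S a i * P j * Q k + W a j * W k i * Q k * S a i * P j) with hC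
  have hswap : C = ∑ a, ∑ i, ∑ j, ∑ k,
      (W i k * W a j * S i a * P j * Q k + W i j * W k a * Q k * S i a * P j) :=
    Finset.sum_comm
  have hneg : C = -C := by
    conv_lhs => rw [hswap]
    calc (∑ a, ∑ i, ∑ j, ∑ k,
        (W i k * W a j * S i a * P j * Q k + W i j * W k a * Q k * S i a * P j))
        = ∑ a, ∑ i, ∑ j, ∑ k,
          -(W a k * W i j * S a i * P j * Q k + W a j * W k i * Q k * S a i * P j) :=
          Finset.sum_congr rfl fun a _ => Finset.sum_congr rfl fun i _ =>
            Finset.sum_congr rfl fun j _ => Finset.sum_congr rfl fun k _ => by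
              rw [hW i k, hW k a, hS i a]; ring
      _ = -C := by rw [hC]; simp only [Finset.sum_neg_distrib]
  linarith

lemma blockExpand (W : Fin n → Fin n → ℝ) (X : Fin n → Fin n → Fin n → ℝ) (H : Fin n → ℝ) :
    (∑ a, ∑ k, W a k * (∑ i, ∑ j, X a i j) * H k)
      = ∑ a, ∑ i, ∑ j, ∑ k, W a k * X a i j * H k := by
  refine Finset.sum_congr rfl fun a _ => ?_
  have h1 : (∑ k, W a k * (∑ i, ∑ j, X a i j) * H k)
      = ∑ k, ∑ i, ∑ j, W a k * X a i j * H k := by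
    refine Finset.sum_congr rfl fun k _ => ?_
    rw [Finset.mul_sum, Finset.sum_mul]
    refine Finset.sum_congr rfl fun i _ => ?_
    rw [Finset.mul_sum, Finset.sum_mul]
  rw [h1]
  exact sum3_rot' fun i j k => W a k * X a i j * H k

/-- Expanding one cyclic block into three canonical quadruple sums. -/
lemma blockSplit (W : Fin n → Fin n → ℝ) (DW : Fin n → Fin n → Fin n → ℝ)
    (P Q R : Fin n → ℝ) (S2 T2 : Fin n → Fin n → ℝ) :
    (∑ a, ∑ i, ∑ j, ∑ k,
        W a k * (DW a i j * P i * Q j + W i j * S2 a i * Q j + W i j * P i * T2 a j) * R k)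
      = (∑ a, ∑ i, ∑ j, ∑ k, W a k * DW a i j * P i * Q j * R k)
      + (∑ a, ∑ i, ∑ j, ∑ k, W a k * W i j * S2 a i * Q j * R k)
      + (∑ a, ∑ i, ∑ j, ∑ k, W a k * W i j * P i * T2 a j * R k) := by
  have h : (∑ a, ∑ i, ∑ j, ∑ k, W a k * DW a i j * P i * Q j * R k)
      + (∑ a, ∑ i, ∑ j, ∑ k, W a k * W i j * S2 a i * Q j * R k)
      + (∑ a, ∑ i, ∑ j, ∑ k, W a k * W i j * P i * T2 a j * R k)
      = ∑ a, ∑ i, ∑ j, ∑ k,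
          (W a k * DW a i j * P i * Q j * R k + W a k * W i j * S2 a i * Q j * R k
            + W a k * W i j * P i * T2 a j * R k) := by
    simp [← Finset.sum_add_distrib]
  rw [h]
  refine Finset.sum_congr rfl fun a _ => Finset.sum_congr rfl fun i _ =>
    Finset.sum_congr rfl fun j _ => Finset.sum_congr rfl fun k _ => by ring

/-- The core algebraic identity behind the Jacobi ⇔ Schouten computation. -/
lemma algMain (W : Fin n → Fin n → ℝ) (DW : Fin n → Fin n → Fin n → ℝ)
    (F G H : Fin n → ℝ) (F2 G2 H2 : Fin n → Fin n → ℝ)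
    (hW : ∀ a b, W a b = -W b a)
    (hF2 : ∀ a b, F2 a b = F2 b a) (hG2 : ∀ a b, G2 a b = G2 b a)
    (hH2 : ∀ a b, H2 a b = H2 b a) :
    (∑ a, ∑ k, W a k * (∑ i, ∑ j, (DW a i j * F i * G j + W i j * F2 a i * G j
        + W i j * F i * G2 a j)) * H k)
    + (∑ a, ∑ k, W a k * (∑ i, ∑ j, (DW a i j * G i * H j + W i j * G2 a i * H j
        + W i j * G i * H2 a j)) * F k)
    + (∑ a, ∑ k, W a k * (∑ i, ∑ j, (DW a i j * H i * F j + W i j * H2 a i * F j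
        + W i j * H i * F2 a j)) * G k)
    = ∑ i, ∑ j, ∑ k,
        (∑ a, (W a i * DW a j k + W a j * DW a k i + W a k * DW a i j)) * F i * G j * H k := by
  rw [blockExpand, blockExpand, blockExpand, blockSplit, blockSplit, blockSplit]
  -- rewrite the two non-canonical T-sums
  have hT2 : (∑ a, ∑ i, ∑ j, ∑ k, W a k * DW a i j * G i * H j * F k)
      = ∑ a, ∑ i, ∑ j, ∑ k, W a i * DW a j k * F i * G j * H k := by
    refine Finset.sum_congr rfl fun a _ => Eq.symm ?_
    calc (∑ i, ∑ j, ∑ k, W a i * DW a j k * F i * G j * H k)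
        = ∑ i, ∑ j, ∑ k, W a i * DW a j k * G j * H k * F i :=
          Finset.sum_congr rfl fun i _ => Finset.sum_congr rfl fun j _ =>
            Finset.sum_congr rfl fun k _ => by ring
      _ = ∑ i, ∑ j, ∑ k, W a k * DW a i j * G i * H j * F k :=
          sum3_rot' fun i j k => W a k * DW a i j * G i * H j * F k
  have hT3 : (∑ a, ∑ i, ∑ j, ∑ k, W a k * DW a i j * H i * F j * G k)
      = ∑ a, ∑ i, ∑ j, ∑ k, W a j * DW a k i * F i * G j * H k := by
    refine Finset.sum_congr rfl fun a _ => Eq.symm ?_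
    calc (∑ i, ∑ j, ∑ k, W a j * DW a k i * F i * G j * H k)
        = ∑ i, ∑ j, ∑ k, W a j * DW a k i * H k * F i * G j :=
          Finset.sum_congr rfl fun i _ => Finset.sum_congr rfl fun j _ =>
            Finset.sum_congr rfl fun k _ => by ring
      _ = ∑ i, ∑ j, ∑ k, W a k * DW a i j * H i * F j * G k :=
          sum3_rot fun i j k => W a k * DW a i j * H i * F j * G k
  rw [hT2, hT3]
  -- expand the right-hand side
  have hRHS : (∑ i, ∑ j, ∑ k,
        (∑ a, (W a i * DW a j k + W a j * DW a k i + W a k * DW a i j)) * F i * G j * H k)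
      = (∑ a, ∑ i, ∑ j, ∑ k, W a i * DW a j k * F i * G j * H k)
      + (∑ a, ∑ i, ∑ j, ∑ k, W a j * DW a k i * F i * G j * H k)
      + (∑ a, ∑ i, ∑ j, ∑ k, W a k * DW a i j * F i * G j * H k) := by
    have h1 : (∑ i, ∑ j, ∑ k,
          (∑ a, (W a i * DW a j k + W a j * DW a k i + W a k * DW a i j)) * F i * G j * H k)
        = ∑ i, ∑ j, ∑ k, ∑ a,
            ((W a i * DW a j k + W a j * DW a k i + W a k * DW a i j) * F i * G j * H k) := by
      refine Finset.sum_congr rfl fun i _ => Finset.sum_congr rfl fun j _ =>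
        Finset.sum_congr rfl fun k _ => ?_
      rw [Finset.sum_mul, Finset.sum_mul, Finset.sum_mul]
    rw [h1, ← sum4_rot]
    have h2 : (∑ a, ∑ i, ∑ j, ∑ k,
          ((W a i * DW a j k + W a j * DW a k i + W a k * DW a i j) * F i * G j * H k))
        = ∑ a, ∑ i, ∑ j, ∑ k,
            (W a i * DW a j k * F i * G j * H k + W a j * DW a k i * F i * G j * H k
              + W a k * DW a i j * F i * G j * H k) :=
      Finset.sum_congr rfl fun a _ => Finset.sum_congr rfl fun i _ =>
        Finset.sum_congr rfl fun j _ => Finset.sum_congr rfl fun k _ => by ring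
    rw [h2]
    simp [← Finset.sum_add_distrib]
  rw [hRHS]
  have c1 := cancelE hW hF2 G H
  have c2 := cancelE hW hG2 H F
  have c3 := cancelE hW hH2 F G
  linarith

end Alg

section Bridge

variable {n : ℕ}

lemma pd_bktM {w : Vec n → Fin n → Fin n → ℝ} (hsm : SmoothM w)
    {f g : Vec n → ℝ} (hf : Sm f) (hg : Sm g) (a : Fin n) (x : Vec n) :
    pd a (bktM w f g) x = ∑ i, ∑ j,
      (pd a (fun y => w y i j) x * pd i f x * pd j g x
        + w x i j * pd a (pd i f) x * pd j g x
        + w x i j * pd i f x * pd a (pd j g) x) := by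
  have hdw : ∀ i j : Fin n, Differentiable ℝ fun y => w y i j :=
    fun i j => (hsm i j).differentiable (by simp)
  have hdf : ∀ i : Fin n, Differentiable ℝ (pd i f) := pd_diff hf
  have hdg : ∀ j : Fin n, Differentiable ℝ (pd j g) := pd_diff hg
  have hterm : ∀ (i j : Fin n), DifferentiableAt ℝ (fun y => w y i j * pd i f y * pd j g y) x :=
    fun i j => (((hdw i j) x).mul ((hdf i) x)).mul ((hdg j) x)
  have h0 : bktM w f g = fun y => ∑ i, ∑ j, w y i j * pd i f y * pd j g y := rfl
  rw [h0, pd_sum (x := x) Finset.univ (fun i y => ∑ j, w y i j * pd i f y * pd j g y)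
    (fun i _ => DifferentiableAt.fun_sum fun j _ => hterm i j) a]
  refine Finset.sum_congr rfl fun i _ => ?_
  rw [pd_sum (x := x) Finset.univ (fun j y => w y i j * pd i f y * pd j g y)
    (fun j _ => hterm i j) a]
  refine Finset.sum_congr rfl fun j _ => ?_
  exact pd_mul3 ((hdw i j) x) ((hdf i) x) ((hdg j) x) a

lemma pd_pd_fol {S : Finset (Fin n)} {f : Vec n → ℝ} (hf : Sm f) (hfol : FolS S f)
    {k : Fin n} (hk : k ∈ S) (i : Fin n) (x : Vec n) :
    pd k (pd i f) x = 0 := by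
  rw [pd_comm hf]
  have h : pd k f = fun _ => (0:ℝ) := funext fun y => hfol k hk y
  rw [h, pd_const]

/-- The key identity: the cyclic Jacobi sum equals the contraction of `SchComp` with the
differentials. -/
lemma jac_eq {w : Vec n → Fin n → Fin n → ℝ} (hsk : SkewM w) (hsm : SmoothM w)
    {f g h : Vec n → ℝ} (hf : Sm f) (hg : Sm g) (hh : Sm h) (x : Vec n) :
    bktM w (bktM w f g) h x + bktM w (bktM w g h) f x + bktM w (bktM w h f) g x
      = ∑ i, ∑ j, ∑ k, SchComp w x i j k * pd i f x * pd j g x * pd k h x := by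
  have e1 : bktM w (bktM w f g) h x
      = ∑ a, ∑ k, w x a k * (∑ i, ∑ j,
          (pd a (fun y => w y i j) x * pd i f x * pd j g x
            + w x i j * pd a (pd i f) x * pd j g x
            + w x i j * pd i f x * pd a (pd j g) x)) * pd k h x := by
    refine Finset.sum_congr rfl fun a _ => Finset.sum_congr rfl fun k _ => ?_
    rw [pd_bktM hsm hf hg]
  have e2 : bktM w (bktM w g h) f x
      = ∑ a, ∑ k, w x a k * (∑ i, ∑ j,
          (pd a (fun y => w y i j) x * pd i g x * pd j h x
            + w x i j * pd a (pd i g) x * pd j h x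
            + w x i j * pd i g x * pd a (pd j h) x)) * pd k f x := by
    refine Finset.sum_congr rfl fun a _ => Finset.sum_congr rfl fun k _ => ?_
    rw [pd_bktM hsm hg hh]
  have e3 : bktM w (bktM w h f) g x
      = ∑ a, ∑ k, w x a k * (∑ i, ∑ j,
          (pd a (fun y => w y i j) x * pd i h x * pd j f x
            + w x i j * pd a (pd i h) x * pd j f x
            + w x i j * pd i h x * pd a (pd j f) x)) * pd k g x := by
    refine Finset.sum_congr rfl fun a _ => Finset.sum_congr rfl fun k _ => ?_
    rw [pd_bktM hsm hh hf]
  rw [e1, e2, e3]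
  have halg := algMain (fun a b => w x a b) (fun a i j => pd a (fun y => w y i j) x)
    (fun i => pd i f x) (fun j => pd j g x) (fun k => pd k h x)
    (fun a i => pd a (pd i f) x) (fun a i => pd a (pd i g) x) (fun a i => pd a (pd i h) x)
    (fun a b => hsk x a b)
    (fun a b => pd_comm hf a b x) (fun a b => pd_comm hg a b x) (fun a b => pd_comm hh a b x)
  rw [halg]
  refine Finset.sum_congr rfl fun i _ => Finset.sum_congr rfl fun j _ =>
    Finset.sum_congr rfl fun k _ => ?_
  rfl

end Bridge

/-- a bivector field `w` on a foliated manifold `(N, F)` defines a transversal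
Poisson structure (its bracket is a Lie bracket on foliated functions) iff
`(L_Y w)|_{Ann TF} = 0` for all `Y` tangent to `F`, and `[w,w]|_{Ann TF} = 0`. -/
theorem stmt8 {n : ℕ} (S : Finset (Fin n)) (w : Vec n → Fin n → Fin n → ℝ)
    (hsk : SkewM w) (hsm : SmoothM w) :
    ((∀ f g : Vec n → ℝ, Sm f → Sm g → FolS S f → FolS S g → FolS S (bktM w f g)) ∧
     (∀ f g h : Vec n → ℝ, Sm f → Sm g → Sm h → FolS S f → FolS S g → FolS S h →
       ∀ x, bktM w (bktM w f g) h x + bktM w (bktM w g h) f x + bktM w (bktM w h f) g x = 0))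
    ↔
    ((∀ Y : Vec n → Vec n, SmoothVF Y → TangS S Y →
        ∀ x i j, i ∉ S → j ∉ S → LieBiv Y w x i j = 0) ∧
     (∀ x (i j k : Fin n), i ∉ S → j ∉ S → k ∉ S → SchComp w x i j k = 0)) := by
  constructor
  · rintro ⟨L1, L2⟩
    -- key consequence of L1
    have hP : ∀ i j : Fin n, i ∉ S → j ∉ S → ∀ k ∈ S, ∀ x,
        pd k (fun y => w y i j) x = 0 := by
      intro i j hi hj k hk x
      have := L1 (coord i) (coord j) (sm_coord i) (sm_coord j)
        (fol_coord hi) (fol_coord hj) k hk x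
      rwa [bktM_coord] at this
    constructor
    · intro Y hY hT x i j hi hj
      unfold LieBiv
      have h2 : (∑ k, w x k j * pd k (fun y => Y y i) x) = 0 := by
        have : (fun y => Y y i) = fun _ => (0:ℝ) := funext fun y => hT i hi y
        rw [this]
        simp [pd_const]
      have h3 : (∑ k, w x i k * pd k (fun y => Y y j) x) = 0 := by
        have : (fun y => Y y j) = fun _ => (0:ℝ) := funext fun y => hT j hj y
        rw [this]
        simp [pd_const]
      have h1 : (∑ k, Y x k * pd k (fun y => w y i j) x) = 0 := by
        refine Finset.sum_eq_zero fun k _ => ?_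
        by_cases hk : k ∈ S
        · rw [hP i j hi hj k hk x, mul_zero]
        · rw [hT k hk x, zero_mul]
      rw [h1, h2, h3]
      ring
    · intro x i j k hi hj hk
      have := L2 (coord i) (coord j) (coord k) (sm_coord i) (sm_coord j) (sm_coord k)
        (fol_coord hi) (fol_coord hj) (fol_coord hk) x
      rw [jac_eq hsk hsm (sm_coord i) (sm_coord j) (sm_coord k) x] at this
      have heval : (∑ a, ∑ b, ∑ c, SchComp w x a b c * pd a (coord i) x * pd b (coord j) x
          * pd c (coord k) x) = SchComp w x i j k := by
        simp [pd_coord]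
      rw [heval] at this
      exact this
  · rintro ⟨R1, R2⟩
    have hP : ∀ i j : Fin n, i ∉ S → j ∉ S → ∀ k ∈ S, ∀ x,
        pd k (fun y => w y i j) x = 0 := by
      intro i j hi hj k hk x
      have hY : SmoothVF (fun _ : Vec n => (Pi.single k 1 : Vec n)) :=
        fun m => contDiff_const
      have hT : TangS S (fun _ : Vec n => (Pi.single k 1 : Vec n)) := by
        intro m hm y
        exact Pi.single_eq_of_ne (fun h : m = k => hm (by rw [h]; exact hk)) 1
      have := R1 _ hY hT x i j hi hj
      unfold LieBiv at this
      have h2 : (∑ m, w x m j * pd m (fun _ : Vec n => (Pi.single k 1 : Vec n) i) x) = 0 := by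
        simp [pd_const]
      have h1 : (∑ m, (Pi.single k 1 : Vec n) m * pd m (fun y => w y i j) x)
          = pd k (fun y => w y i j) x := by
        rw [Finset.sum_eq_single k]
        · simp
        · intro b _ hb
          rw [Pi.single_eq_of_ne hb, zero_mul]
        · intro hb
          exact absurd (Finset.mem_univ k) hb
      rw [h1] at this
      simp only [pd_const] at this
      simpa using this
    constructor
    · intro f g hf hg hff hfg k hk x
      rw [pd_bktM hsm hf hg]
      refine Finset.sum_eq_zero fun i _ => Finset.sum_eq_zero fun j _ => ?_
      have t2 : w x i j * pd k (pd i f) x * pd j g x = 0 := by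
        rw [pd_pd_fol hf hff hk i x]; ring
      have t3 : w x i j * pd i f x * pd k (pd j g) x = 0 := by
        rw [pd_pd_fol hg hfg hk j x]; ring
      have t1 : pd k (fun y => w y i j) x * pd i f x * pd j g x = 0 := by
        by_cases hi : i ∈ S
        · rw [hff i hi x]; ring
        · by_cases hj : j ∈ S
          · rw [hfg j hj x]; ring
          · rw [hP i j hi hj k hk x]; ring
      rw [t1, t2, t3]
      ring
    · intro f g h hf hg hh hff hfg hfh x
      rw [jac_eq hsk hsm hf hg hh x]
      refine Finset.sum_eq_zero fun i _ => Finset.sum_eq_zero fun j _ =>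
        Finset.sum_eq_zero fun k _ => ?_
      by_cases hi : i ∈ S
      · rw [hff i hi x]; ring
      · by_cases hj : j ∈ S
        · rw [hfg j hj x]; ring
        · by_cases hk : k ∈ S
          · rw [hfh k hk x]; ring
          · rw [R2 x i j k hi hj hk]; ring
end
end
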